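/- arXiv:2511.04416 — 2 statements merged into one kernel-verified Lean document; each statement's English description precedes it below -/
import Mathlib

section
/- Let H be a Hilbert space, V a closed subspace with orthogonal projection P_V, and W a closed subspace such that V ⊕ W^⊥ = H. Then P_V P_W P_V restricted to V (i.e. the compression of P_W to V) is an invertible operator on V. -/
/-!
For `x ∈ V` one has `⟪P_V P_W x, x⟫ = ‖P_W x‖²`, and since `P_W x` differs from `x` by a vector
of `Wᗮ`, the bounded projection onto `V` along `Wᗮ` gives `‖x‖ ≤ C ‖P_W x‖`. Hence the compression
of `P_W` to `V` is coercive, and a coercive operator on a Hilbert space is invertible.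
-/

open scoped InnerProductSpace NNReal

namespace Submodule

section TopCompl

variable {𝕜 E : Type*} [NontriviallyNormedField 𝕜] [NormedAddCommGroup E] [NormedSpace 𝕜 E]
  {p q : Submodule 𝕜 E}

theorem IsTopCompl.exists_pos_norm_le_mul_norm_add (h : IsTopCompl p q) :
    ∃ C : ℝ≥0, 0 < C ∧ ∀ x ∈ p, ∀ y ∈ q, ‖x‖ ≤ C * ‖x + y‖ := by
  set π := p.projectionOntoL q h
  refine ⟨‖π‖₊ + 1, by positivity, fun x hx y hy => ?_⟩
  have hπ : π (x + y) = ⟨x, hx⟩ := by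
    rw [map_add, projectionOntoL_apply_left h ⟨x, hx⟩, projectionOntoL_apply_right h ⟨y, hy⟩,
      add_zero]
  calc ‖x‖ = ‖π (x + y)‖ := by rw [hπ]; rfl
    _ ≤ ‖π‖ * ‖x + y‖ := π.le_opNorm _
    _ ≤ (‖π‖₊ + 1 : ℝ≥0) * ‖x + y‖ := by gcongr; push_cast; simp

end TopCompl

variable {𝕜 E : Type*} [RCLike 𝕜] [NormedAddCommGroup E] [InnerProductSpace 𝕜 E]

noncomputable def compress (V : Submodule 𝕜 E) [V.HasOrthogonalProjection] (A : E →L[𝕜] E) :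
    V →L[𝕜] V :=
  V.orthogonalProjectionOnto ∘L A ∘L V.subtypeL

@[simp]
theorem compress_apply (V : Submodule 𝕜 E) [V.HasOrthogonalProjection] (A : E →L[𝕜] E) (x : V) :
    V.compress A x = V.orthogonalProjectionOnto (A x) :=
  rfl

theorem inner_compress_apply_self (V : Submodule 𝕜 E) [V.HasOrthogonalProjection]
    (A : E →L[𝕜] E) (x : V) : ⟪V.compress A x, x⟫_𝕜 = ⟪A x, x⟫_𝕜 := by
  rw [compress_apply, inner_orthogonalProjectionOnto_eq_of_mem_right]

theorem inner_starProjection_self (W : Submodule 𝕜 E) [W.HasOrthogonalProjection] (x : E) :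
    ⟪W.starProjection x, x⟫_𝕜 = (‖W.starProjection x‖ ^ 2 : ℝ) := by
  have hPP : W.starProjection (W.starProjection x) = W.starProjection x :=
    starProjection_eq_self_iff.mpr (W.starProjection_apply_mem x)
  calc ⟪W.starProjection x, x⟫_𝕜 = ⟪W.starProjection (W.starProjection x), x⟫_𝕜 := by rw [hPP]
    _ = ⟪W.starProjection x, W.starProjection x⟫_𝕜 := inner_starProjection_left_eq_right W _ _
    _ = (‖W.starProjection x‖ ^ 2 : ℝ) := by rw [inner_self_eq_norm_sq_to_K]; norm_cast

theorem IsTopCompl.exists_pos_mul_sq_le_norm_inner_compress_starProjection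
    {V W : Submodule 𝕜 E} [V.HasOrthogonalProjection] [W.HasOrthogonalProjection]
    (h : IsTopCompl V Wᗮ) :
    ∃ c : ℝ≥0, 0 < c ∧ ∀ x : V, ‖x‖ ^ 2 * c ≤ ‖⟪V.compress W.starProjection x, x⟫_𝕜‖ := by
  obtain ⟨C, hC, hbound⟩ := h.exists_pos_norm_le_mul_norm_add
  refine ⟨(C ^ 2)⁻¹, by positivity, fun x => ?_⟩
  have hperp : W.starProjection x - x ∈ Wᗮ := by
    simpa using Wᗮ.neg_mem (W.sub_starProjection_mem_orthogonal x)
  have hx : ‖(x : E)‖ ≤ C * ‖W.starProjection x‖ := by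
    simpa using hbound x x.2 _ hperp
  rw [inner_compress_apply_self, inner_starProjection_self, RCLike.norm_ofReal, abs_sq,
    NNReal.coe_inv, NNReal.coe_pow, ← div_eq_mul_inv, div_le_iff₀ (by positivity), ← mul_pow,
    mul_comm]
  exact pow_le_pow_left₀ (norm_nonneg _) hx 2

end Submodule

/-- If `V`, `W` are closed subspaces of a Hilbert space `H` with `V ⊕ W^⊥ = H`,
then the compression `x ↦ P_V (P_W x)` of `P_W` to `V` is an isomorphism of `V`
(a continuous linear bijection, hence a Banach space isomorphism). -/
theorem compression_bijective (H : Type*) [NormedAddCommGroup H] [InnerProductSpace ℂ H]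
    [CompleteSpace H] (V W : Submodule ℂ H)
    (hV : IsClosed (V : Set H)) (hW : IsClosed (W : Set H))
    (hcompl : IsCompl V Wᗮ) :
    letI : CompleteSpace V := hV.completeSpace_coe
    letI : CompleteSpace W := hW.completeSpace_coe
    Function.Bijective
      (fun x : V => Submodule.orthogonalProjection V ((Submodule.orthogonalProjection W (x : H) : W) : H)) := by
  have : CompleteSpace V := hV.completeSpace_coe
  have : CompleteSpace W := hW.completeSpace_coe
  have hTop : Submodule.IsTopCompl V Wᗮ :=
    Submodule.IsCompl.isTopCompl_of_isClosed hcompl hV W.isClosed_orthogonal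
  obtain ⟨c, hc, hcoercive⟩ := hTop.exists_pos_mul_sq_le_norm_inner_compress_starProjection
  exact ContinuousLinearMap.isUnit_iff_bijective.mp
    (ContinuousLinearMap.isUnit_of_forall_le_norm_inner_map _ hc hcoercive)
end

section
/- If E is a Banach space and F, G, G' are closed subspaces with F ⊕ G = E and F ⊕ G' = E, then for every closed subspace H with H ⊕ G = E and H ⊕ G' = E, the operator π_{G'}(F)(1 + A) : F → F is invertible, where A = φ_{F,G}(H) is the operator whose graph is H and π_{G'}(F) is the projection onto F along G'. -/
/-!
The projection `π` along `G'` has kernel exactly `G'`, so its restriction to any complement `H`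
of `G'` is an isomorphism `H ≃ F`. Since `F ∩ G = 0`, `x ↦ x + A x` is a bijection from `F` onto
its graph `H`, and the transition operator is the composite of these two bijections.
-/

open Function LinearMap Submodule

section LinearAlgebra

variable {R M : Type*} [Ring R] [AddCommGroup M] [Module R M]

theorem Submodule.ker_eq_of_isCompl_of_proj {F G : Submodule R M} (h : IsCompl F G)
    {π : M →ₗ[R] F} (hπF : ∀ x : F, π x = x) (hπG : ∀ y : G, π y = 0) : ker π = G := by
  have hπ : π = projectionOnto F G h :=
    ext_on_codisjoint h.codisjoint
      (fun x hx => by simp only [hπF ⟨x, hx⟩, projectionOnto_apply_of_mem_left h hx])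
      (fun y hy => by simp only [hπG ⟨y, hy⟩, projectionOnto_apply_of_mem_right h hy])
  rw [hπ, ker_projectionOnto]

theorem LinearMap.bijective_domRestrict_of_isCompl_ker {N : Type*} [AddCommGroup N] [Module R N]
    {f : M →ₗ[R] N} (hf : Surjective f) {H : Submodule R M} (h : IsCompl H (ker f)) :
    Bijective (f.domRestrict H) :=
  ⟨injective_domRestrict_iff.2 h.disjoint, (surjective_domRestrict_iff hf).2 h.codisjoint⟩

theorem Submodule.injective_add_of_disjoint {F G : Submodule R M} (h : Disjoint F G)
    (A : F → G) : Injective (fun x : F => (x : M) + A x) := by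
  intro x y (hxy : (x : M) + A x = y + A y)
  have hFG : (x : M) - y = A y - A x := sub_eq_sub_iff_add_eq_add.2 (by rw [hxy, add_comm])
  have hmem : (x : M) - y ∈ F ⊓ G := ⟨sub_mem x.2 y.2, hFG ▸ sub_mem (A y).2 (A x).2⟩
  rw [h.eq_bot, mem_bot, sub_eq_zero] at hmem
  exact Subtype.ext hmem

end LinearAlgebra

theorem transition_operator_bijective_general (E : Type*) [NormedAddCommGroup E] [NormedSpace ℂ E]
    (F G G' H : Submodule ℂ E)
    (hFG : IsCompl F G) (hFG' : IsCompl F G') (hHG' : IsCompl H G')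
    (A : F →L[ℂ] G)
    (hA : (H : Set E) = Set.range (fun x : F => (x : E) + ((A x : G) : E)))
    (π : E →L[ℂ] F) (hπF : ∀ x : F, π (x : E) = x) (hπG' : ∀ y : G', π (y : E) = 0) :
    Function.Bijective (fun x : F => π ((x : E) + ((A x : G) : E))) := by
  have hker : ker (π : E →ₗ[ℂ] F) = G' := ker_eq_of_isCompl_of_proj hFG' hπF hπG'
  have hπH : Bijective ((π : E →ₗ[ℂ] F).domRestrict H) :=
    bijective_domRestrict_of_isCompl_ker (f := (π : E →ₗ[ℂ] F)) (fun x => ⟨x, hπF x⟩)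
      (hker ▸ hHG')
  let graph : F → H := Set.codRestrict (fun x : F => (x : E) + A x) H
    (fun x => hA ▸ Set.mem_range_self x)
  have hgraph : Bijective graph := by
    refine ⟨(Set.injective_codRestrict _).2 (injective_add_of_disjoint hFG.disjoint A), ?_⟩
    rintro ⟨h, hh⟩
    obtain ⟨x, hx⟩ : h ∈ Set.range (fun x : F => (x : E) + A x) := hA ▸ hh
    exact ⟨x, Subtype.ext hx⟩
  exact hπH.comp hgraph

/-- Let `E` be a Banach space with closed subspaces `F`, `G`, `G'` such that
`F ⊕ G = E` and `F ⊕ G' = E`.  Let `H` be a closed subspace complementary to both `G`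
and `G'`, and let `A : F → G` be the (unique) bounded operator whose graph is `H`, i.e.
`H = {x + A x : x ∈ F}`.  If `π : E → F` is the bounded projection onto `F` along `G'`
(that is, `π = id` on `F` and `π = 0` on `G'`), then the operator
`x ↦ π (x + A x) : F → F` (i.e. `π_{G'}(F)(1 + A)`) is invertible (a continuous linear
bijection, hence an isomorphism of `F`). -/
theorem transition_operator_bijective (E : Type*) [NormedAddCommGroup E] [NormedSpace ℂ E]
    [CompleteSpace E] (F G G' H : Submodule ℂ E)
    (hF : IsClosed (F : Set E)) (hG : IsClosed (G : Set E)) (hG' : IsClosed (G' : Set E))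
    (hH : IsClosed (H : Set E))
    (hFG : IsCompl F G) (hFG' : IsCompl F G') (hHG : IsCompl H G) (hHG' : IsCompl H G')
    (A : F →L[ℂ] G)
    (hA : (H : Set E) = Set.range (fun x : F => (x : E) + ((A x : G) : E)))
    (π : E →L[ℂ] F) (hπF : ∀ x : F, π (x : E) = x) (hπG' : ∀ y : G', π (y : E) = 0) :
    Function.Bijective (fun x : F => π ((x : E) + ((A x : G) : E))) :=
  transition_operator_bijective_general E F G G' H hFG hFG' hHG' A hA π hπF hπG'
end
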